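/- For a skew-symmetric matrix M of even size 2k over a commutative ring, the determinant of M equals the square of its Pfaffian. -/

import Mathlib

/-!
Over a field, pivot on a nonzero entry `M i j`: the Schur complement of the `2 × 2` block on
`{i, j}` is again alternating and `det M = (M i j) ^ 2 * det (complement)`, so `det M` is a square
by induction on the size. Over an arbitrary commutative ring, every alternating matrix is a
specialization of the generic one with entries `X (i, j) - X (j, i)` over `ℤ[X]`; its determinant
is a square in the fraction field, hence in `ℤ[X]`, which is integrally closed.
-/

open Matrix

noncomputable def Equiv.sumComplPair {ι : Type*} {i j : ι} (hij : i ≠ j) :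
    Fin 2 ⊕ {x // x ≠ i ∧ x ≠ j} ≃ ι :=
  Equiv.ofBijective (Sum.elim ![i, j] Subtype.val) <| by
    refine ⟨(injective_pair_iff_ne.mpr hij).sumElim Subtype.val_injective ?_, fun x => ?_⟩
    · rintro a ⟨b, hb⟩ rfl
      fin_cases a <;> simp at hb
    · by_cases hi : x = i
      · exact ⟨.inl 0, by simp [hi]⟩
      by_cases hj : x = j
      · exact ⟨.inl 1, by simp [hj]⟩
      exact ⟨.inr ⟨x, hi, hj⟩, rfl⟩

@[simp]
theorem Equiv.sumComplPair_inl_zero {ι : Type*} {i j : ι} (hij : i ≠ j) :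
    Equiv.sumComplPair hij (.inl 0) = i :=
  rfl

@[simp]
theorem Equiv.sumComplPair_inl_one {ι : Type*} {i j : ι} (hij : i ≠ j) :
    Equiv.sumComplPair hij (.inl 1) = j :=
  rfl

theorem IsIntegrallyClosed.isSquare_of_isSquare_algebraMap {A K : Type*} [CommRing A]
    [IsIntegrallyClosed A] [Field K] [Algebra A K] [IsFractionRing A K] {x : A}
    (hx : IsSquare (algebraMap A K x)) : IsSquare x := by
  obtain ⟨a, ha⟩ := hx
  have hint : IsIntegral A a :=
    ⟨Polynomial.X ^ 2 - Polynomial.C x, Polynomial.monic_X_pow_sub_C _ two_ne_zero, by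
      simp [ha, sq]⟩
  obtain ⟨b, rfl⟩ := IsIntegrallyClosed.isIntegral_iff.mp hint
  exact ⟨b, IsFractionRing.injective A K (by rw [ha, map_mul])⟩

namespace Matrix

variable {ι κ : Type*}

def IsAlternating {R : Type*} [Neg R] [Zero R] (A : Matrix ι ι R) : Prop :=
  Aᵀ = -A ∧ ∀ i, A i i = 0

open MvPolynomial in
noncomputable def genericAlternating (ι : Type*) : Matrix ι ι (MvPolynomial (ι × ι) ℤ) :=
  of fun i j => X (i, j) - X (j, i)

theorem genericAlternating_isAlternating : (genericAlternating ι).IsAlternating :=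
  ⟨by ext i j; simp [genericAlternating], fun i => by simp [genericAlternating]⟩

namespace IsAlternating

section CommRing

variable {R : Type*} [CommRing R] {A B : Matrix ι ι R}

theorem apply_swap (hA : A.IsAlternating) (i j : ι) : A j i = -A i j :=
  congrFun (congrFun hA.1 i) j

theorem add (hA : A.IsAlternating) (hB : B.IsAlternating) : (A + B).IsAlternating :=
  ⟨by rw [transpose_add, hA.1, hB.1, neg_add], fun i => by simp [hA.2 i, hB.2 i]⟩

theorem neg (hA : A.IsAlternating) : (-A).IsAlternating :=
  ⟨by rw [transpose_neg, hA.1], fun i => by simp [hA.2 i]⟩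

theorem smul (hA : A.IsAlternating) (r : R) : (r • A).IsAlternating :=
  ⟨by rw [transpose_smul, hA.1, smul_neg], fun i => by simp [hA.2 i]⟩

theorem submatrix (hA : A.IsAlternating) (e : κ → ι) : (A.submatrix e e).IsAlternating :=
  ⟨by ext i j; exact hA.apply_swap (e i) (e j), fun i => hA.2 (e i)⟩

theorem map {S : Type*} [CommRing S] (hA : A.IsAlternating) (f : R →+* S) :
    (A.map f).IsAlternating :=
  ⟨by ext i j; simp [hA.apply_swap i j], fun i => by simp [hA.2 i]⟩

/- The terms indexed by `(i, j)` and `(j, i)` cancel and the diagonal ones vanish; this avoids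
the argument `2 * (x ⬝ᵥ A *ᵥ x) = 0`, which is useless in characteristic `2`. -/
theorem dotProduct_mulVec_self [Fintype ι] (hA : A.IsAlternating) (x : ι → R) :
    x ⬝ᵥ (A *ᵥ x) = 0 := by
  simp only [dotProduct, mulVec, Finset.mul_sum, ← Finset.sum_product']
  refine Finset.sum_ninvolution Prod.swap (fun p => ?_) (fun ⟨i, j⟩ hp hfix => ?_)
    (by simp) (by simp)
  · rw [Prod.fst_swap, Prod.snd_swap, hA.apply_swap]; ring
  · obtain rfl : j = i := congrArg Prod.fst hfix
    simp [hA.2] at hp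

theorem mul_mul_transpose [Fintype ι] (hA : A.IsAlternating) (C : Matrix κ ι R) :
    (C * A * Cᵀ).IsAlternating :=
  ⟨by simp only [transpose_mul, transpose_transpose, hA.1, Matrix.mul_neg, Matrix.neg_mul,
      Matrix.mul_assoc], fun i => by
    rw [Matrix.mul_assoc]
    simp only [mul_apply, transpose_apply]
    exact hA.dotProduct_mulVec_self (C i)⟩

theorem det_fin_two {A : Matrix (Fin 2) (Fin 2) R} (hA : A.IsAlternating) :
    A.det = A 0 1 ^ 2 := by
  rw [Matrix.det_fin_two, hA.2, hA.2, hA.apply_swap]; ring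

theorem adjugate_fin_two {A : Matrix (Fin 2) (Fin 2) R} (hA : A.IsAlternating) :
    A.adjugate = -A := by
  rw [Matrix.adjugate_fin_two]
  ext i j
  fin_cases i <;> fin_cases j <;> simp [hA.2, hA.apply_swap 0 1]

theorem inv_fin_two {A : Matrix (Fin 2) (Fin 2) R} (hA : A.IsAlternating) :
    A⁻¹.IsAlternating := by
  rw [inv_def, hA.adjugate_fin_two]
  exact hA.neg.smul _

theorem exists_sub_swap_eq (hA : A.IsAlternating) :
    ∃ f : ι × ι → R, ∀ i j, f (i, j) - f (j, i) = A i j := by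
  classical
  let _ : LinearOrder ι := WellOrderingRel.isWellOrder.linearOrder
  refine ⟨fun p => if p.1 < p.2 then A p.1 p.2 else 0, fun i j => ?_⟩
  rcases lt_trichotomy i j with h | rfl | h
  · simp [h, h.not_gt]
  · simp [hA.2]
  · simp [h, h.not_gt, hA.apply_swap j i]

theorem exists_map_genericAlternating_eq (hA : A.IsAlternating) :
    ∃ φ : MvPolynomial (ι × ι) ℤ →+* R, (genericAlternating ι).map φ = A := by
  obtain ⟨f, hf⟩ := hA.exists_sub_swap_eq
  exact ⟨MvPolynomial.eval₂Hom (Int.castRingHom R) f, by ext i j; simp [genericAlternating, hf]⟩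

end CommRing

theorem exists_det_eq_sq_mul_det {K : Type*} [Field K] [Fintype κ] [DecidableEq κ]
    {P : Matrix (Fin 2 ⊕ κ) (Fin 2 ⊕ κ) K} (hP : P.IsAlternating)
    (hc : P (.inl 0) (.inl 1) ≠ 0) :
    ∃ S : Matrix κ κ K, S.IsAlternating ∧ P.det = P (.inl 0) (.inl 1) ^ 2 * S.det := by
  have hA : P.toBlocks₁₁.IsAlternating := hP.submatrix Sum.inl
  have hD : P.toBlocks₂₂.IsAlternating := hP.submatrix Sum.inr
  have hB : P.toBlocks₁₂ = -P.toBlocks₂₁ᵀ := by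
    ext i j; exact hP.apply_swap (.inr j) (.inl i)
  have hdetA : P.toBlocks₁₁.det = P (.inl 0) (.inl 1) ^ 2 := hA.det_fin_two
  have := invertibleOfIsUnitDet _ (hdetA ▸ (pow_ne_zero 2 hc).isUnit)
  refine ⟨P.toBlocks₂₂ + P.toBlocks₂₁ * P.toBlocks₁₁⁻¹ * P.toBlocks₂₁ᵀ,
    hD.add (hA.inv_fin_two.mul_mul_transpose _), ?_⟩
  conv_lhs => rw [← fromBlocks_toBlocks P]
  rw [det_fromBlocks₁₁, invOf_eq_nonsing_inv, hdetA, hB, Matrix.mul_neg, sub_neg_eq_add]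

variable [Fintype ι] [DecidableEq ι]

theorem isSquare_det_of_field {K : Type*} [Field K] {M : Matrix ι ι K} (hM : M.IsAlternating) :
    IsSquare M.det := by
  induction h : Fintype.card ι using Nat.strong_induction_on generalizing ι with
  | _ n ih =>
  by_cases hzero : ∀ i j, M i j = 0
  · obtain hι | hι := isEmpty_or_nonempty ι
    · exact ⟨1, by simp⟩
    · exact ⟨0, by simp [show M = 0 from ext hzero]⟩
  push Not at hzero
  obtain ⟨i, j, hij⟩ := hzero
  have hne : i ≠ j := by rintro rfl; exact hij (hM.2 i)
  let e := Equiv.sumComplPair hne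
  obtain ⟨S, hS, hdet⟩ := (hM.submatrix e).exists_det_eq_sq_mul_det (by simpa [e] using hij)
  have hcard : Fintype.card {x // x ≠ i ∧ x ≠ j} < n := by
    rw [← h, ← Fintype.card_congr e, Fintype.card_sum]; simp
  obtain ⟨r, hr⟩ := ih _ hcard hS rfl
  refine ⟨M i j * r, ?_⟩
  rw [← det_submatrix_equiv_self e, hdet, hr, submatrix_apply, Equiv.sumComplPair_inl_zero,
    Equiv.sumComplPair_inl_one]
  ring

theorem isSquare_det_of_isIntegrallyClosed {R : Type*} [CommRing R] [IsDomain R]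
    [IsIntegrallyClosed R] {M : Matrix ι ι R} (hM : M.IsAlternating) : IsSquare M.det := by
  refine IsIntegrallyClosed.isSquare_of_isSquare_algebraMap (K := FractionRing R) ?_
  rw [RingHom.map_det]
  exact (hM.map _).isSquare_det_of_field

theorem isSquare_det {R : Type*} [CommRing R] {M : Matrix ι ι R} (hM : M.IsAlternating) :
    IsSquare M.det := by
  obtain ⟨φ, rfl⟩ := hM.exists_map_genericAlternating_eq
  obtain ⟨p, hp⟩ := (genericAlternating_isAlternating (ι := ι)).isSquare_det_of_isIntegrallyClosed
  exact ⟨φ p, by rw [← RingHom.mapMatrix_apply, ← RingHom.map_det, hp, map_mul]⟩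

end IsAlternating

end Matrix

/-- For a skew-symmetric matrix `M` of even size `2k` over a commutative ring
(with zero diagonal, as required when `2` is not invertible), the determinant
of `M` is the square of its Pfaffian; in particular `det M` is a square. -/
theorem det_eq_pfaffian_sq {R : Type*} [CommRing R] (k : ℕ)
    (M : Matrix (Fin (2 * k)) (Fin (2 * k)) R)
    (hskew : Mᵀ = -M) (hdiag : ∀ i, M i i = 0) :
    ∃ pf : R, M.det = pf ^ 2 := by
  obtain ⟨pf, h⟩ := IsAlternating.isSquare_det ⟨hskew, hdiag⟩
  exact ⟨pf, h.trans (sq pf).symm⟩
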